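/- Let X be a real Banach space and D ⊆ X a dense subset. Then the following are equivalent: (1) X has the DLD2P; (2) for every ε > 0 and every nonzero x ∈ D, x belongs to cl co_ℚ({ y ∈ D : ‖y‖ < ‖x‖ and ‖x − y‖ > 2‖x‖ − ε }). -/

import Mathlib

open scoped BigOperators Topology

/-- The set of all rational convex combinations of elements of `A`, closed in norm. -/
def clCoQ {X : Type*} [NormedAddCommGroup X] [NormedSpace ℝ X] (A : Set X) : Set X :=
  closure {z : X | ∃ (n : ℕ) (q : Fin n → ℚ) (y : Fin n → X),
    (∀ i, 0 < q i) ∧ (∑ i, q i = 1) ∧ (∀ i, y i ∈ A) ∧ z = ∑ i, (q i : ℝ) • y i}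

/-- A slice of the closed unit ball of `X`. -/
def IsSlice {X : Type*} [NormedAddCommGroup X] [NormedSpace ℝ X] (S : Set X) : Prop :=
  ∃ (f : X →L[ℝ] ℝ) (α : ℝ), ‖f‖ = 1 ∧ 0 < α ∧
    S = {x : X | ‖x‖ ≤ 1 ∧ 1 - α < f x}

/-- The local diameter `δ` property. -/
def HasLDP (X : Type*) [NormedAddCommGroup X] [NormedSpace ℝ X] (δ : ℝ) : Prop :=
  ∀ S : Set X, IsSlice S → δ ≤ Metric.diam S

/-- The weak topology of a normed space. -/
def weakTop (X : Type*) [NormedAddCommGroup X] [NormedSpace ℝ X] : TopologicalSpace X :=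
  ⨅ f : X →L[ℝ] ℝ, TopologicalSpace.induced (⇑f) inferInstance

/-- The diameter two property. -/
def HasD2P (X : Type*) [NormedAddCommGroup X] [NormedSpace ℝ X] : Prop :=
  ∀ W : Set X, IsOpen[weakTop X] W → (W ∩ {x : X | ‖x‖ ≤ 1}).Nonempty →
    Metric.diam (W ∩ {x : X | ‖x‖ ≤ 1}) = 2

/-- The diametral diameter two property. -/
def HasDD2P (X : Type*) [NormedAddCommGroup X] [NormedSpace ℝ X] : Prop :=
  ∀ ε > (0 : ℝ), ∀ W : Set X, IsOpen[weakTop X] W →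
    ∀ x ∈ W ∩ {x : X | ‖x‖ ≤ 1}, ‖x‖ = 1 →
      ∃ y ∈ W ∩ {x : X | ‖x‖ ≤ 1}, 2 - ε < ‖x - y‖

/-- A convex combination of the sets `S i` with coefficients `lam i`. -/
def combSet {X : Type*} [NormedAddCommGroup X] [NormedSpace ℝ X]
    (n : ℕ) (lam : Fin n → ℝ) (S : Fin n → Set X) : Set X :=
  {z : X | ∃ y : Fin n → X, (∀ i, y i ∈ S i) ∧ z = ∑ i, lam i • y i}

/-- The strong diameter two property. -/
def HasSD2P (X : Type*) [NormedAddCommGroup X] [NormedSpace ℝ X] : Prop :=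
  ∀ (n : ℕ) (lam : Fin n → ℝ) (S : Fin n → Set X),
    (∀ i, 0 < lam i) → (∑ i, lam i = 1) → (∀ i, IsSlice (S i)) →
    Metric.diam (combSet n lam S) = 2

/-- The diametral local diameter two property. -/
def HasDLD2P (X : Type*) [NormedAddCommGroup X] [NormedSpace ℝ X] : Prop :=
  ∀ ε > (0 : ℝ), ∀ S : Set X, IsSlice S → ∀ x ∈ S, ‖x‖ = 1 →
    ∃ y ∈ S, 2 - ε < ‖x - y‖

/-- The Daugavet property. -/
def HasDaugavet (X : Type*) [NormedAddCommGroup X] [NormedSpace ℝ X] : Prop :=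
  ∀ ε > (0 : ℝ), ∀ x : X, ‖x‖ = 1 → ∀ S : Set X, IsSlice S →
    ∃ y ∈ S, 2 - ε < ‖x - y‖

/-- Locally octahedral norm. -/
def IsLOH (X : Type*) [NormedAddCommGroup X] [NormedSpace ℝ X] : Prop :=
  ∀ ε > (0 : ℝ), ∀ x : X, ∃ y : X, ‖y‖ = 1 ∧
    ∀ t : ℝ, (1 - ε) * (|t| * ‖x‖ + ‖y‖) ≤ ‖t • x + y‖

/-- Octahedral norm. -/
def IsOH (X : Type*) [NormedAddCommGroup X] [NormedSpace ℝ X] : Prop :=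
  ∀ E : Submodule ℝ X, FiniteDimensional ℝ E → ∀ ε > (0 : ℝ),
    ∃ y : X, ‖y‖ = 1 ∧ ∀ x ∈ E, (1 - ε) * (‖x‖ + ‖y‖) ≤ ‖x + y‖

/-- Weakly octahedral norm. -/
def IsWOH (X : Type*) [NormedAddCommGroup X] [NormedSpace ℝ X] : Prop :=
  ∀ E : Submodule ℝ X, FiniteDimensional ℝ E → ∀ f : X →L[ℝ] ℝ, ‖f‖ ≤ 1 →
    ∀ ε > (0 : ℝ), ∃ y : X, ‖y‖ = 1 ∧
      ∀ x ∈ E, (1 - ε) * (|f x| + ‖y‖) ≤ ‖x + y‖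

/-- The closed unit ball of `X` is dentable: it has slices of arbitrarily small diameter. -/
def BallDentable (X : Type*) [NormedAddCommGroup X] [NormedSpace ℝ X] : Prop :=
  ∀ ε > (0 : ℝ), ∃ S : Set X, IsSlice S ∧ Metric.diam S < ε

/-- A seminorm on the space `V = ℕ →₀ ℚ` of finitely supported rational sequences. -/
def IsSeminormV (μ : (ℕ →₀ ℚ) → ℝ) : Prop :=
  (∀ (q : ℚ) (v : ℕ →₀ ℚ), μ (q • v) = |(q : ℝ)| * μ v) ∧
    ∀ u v : ℕ →₀ ℚ, μ (u + v) ≤ μ u + μ v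

/-- A seminorm on the space `c00 = ℕ →₀ ℝ` of finitely supported real sequences. -/
def IsSeminormC00 (ν : (ℕ →₀ ℝ) → ℝ) : Prop :=
  (∀ (c : ℝ) (x : ℕ →₀ ℝ), ν (c • x) = |c| * ν x) ∧
    ∀ x y : ℕ →₀ ℝ, ν (x + y) ≤ ν x + ν y

/-- The canonical inclusion of `V` into `c00`. -/
noncomputable def toC00 : (ℕ →₀ ℚ) → (ℕ →₀ ℝ) :=
  Finsupp.mapRange (fun q : ℚ => (q : ℝ)) Rat.cast_zero

/-- `μ` belongs to `ℬ`: it is a seminorm on `V` whose (unique) seminorm extension to `c00`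
is a norm. -/
def InB (μ : (ℕ →₀ ℚ) → ℝ) : Prop :=
  IsSeminormV μ ∧ ∃ ν : (ℕ →₀ ℝ) → ℝ, IsSeminormC00 ν ∧ (∀ v, ν (toC00 v) = μ v) ∧
    ∀ x : ℕ →₀ ℝ, ν x = 0 → x = 0

/-- The Polish space `𝒫` of seminorms on `V`, with the topology of pointwise convergence. -/
abbrev PSp := {μ : (ℕ →₀ ℚ) → ℝ // IsSeminormV μ}

/-- The space `ℬ` of seminorms on `V` whose extension to `c00` is a norm. -/
abbrev BSp := {μ : (ℕ →₀ ℚ) → ℝ // InB μ}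

/-- `X` is (a representative of) the Banach space `X_μ` associated to the seminorm `μ`:
there is a `ℚ`-linear map `ι : V → X` with `‖ι v‖ = μ v` and dense range. -/
def RepOf (μ : (ℕ →₀ ℚ) → ℝ) (X : Type*) [NormedAddCommGroup X] [NormedSpace ℝ X] : Prop :=
  ∃ ι : (ℕ →₀ ℚ) → X, (∀ u v, ι (u + v) = ι u + ι v) ∧
    (∀ (q : ℚ) (v), ι (q • v) = (q : ℝ) • ι v) ∧
    (∀ v, ‖ι v‖ = μ v) ∧ DenseRange ι


/-- Fσ set: a countable union of closed sets. -/
def IsFsigma {α : Type*} [TopologicalSpace α] (s : Set α) : Prop :=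
  ∃ c : ℕ → Set α, (∀ n, IsClosed (c n)) ∧ s = ⋃ n, c n

/-- Fσδ set: a countable intersection of countable unions of closed sets. -/
def IsFsigmaDelta {α : Type*} [TopologicalSpace α] (s : Set α) : Prop :=
  ∃ c : ℕ → ℕ → Set α, (∀ n m, IsClosed (c n m)) ∧ s = ⋂ n, ⋃ m, c n m

/-- Gurariĭ space. -/
def IsGurarii (G : Type*) [NormedAddCommGroup G] [NormedSpace ℝ G] : Prop :=
  TopologicalSpace.SeparableSpace G ∧
  ∀ (F : Type) [NormedAddCommGroup F] [NormedSpace ℝ F] [FiniteDimensional ℝ F]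
    (E : Submodule ℝ F) (f : E →ₗ[ℝ] G), (∀ x : E, ‖f x‖ = ‖(x : F)‖) →
    ∀ ε > (0 : ℝ), ∃ T : F →ₗ[ℝ] G, (∀ x : E, T (x : F) = f x) ∧
      ∀ x : F, (1 + ε)⁻¹ * ‖x‖ ≤ ‖T x‖ ∧ ‖T x‖ ≤ (1 + ε) * ‖x‖

/-- The weak-* topology on the dual of a normed space. -/
def wstar (X : Type*) [NormedAddCommGroup X] [NormedSpace ℝ X] :
    TopologicalSpace (X →L[ℝ] ℝ) :=
  TopologicalSpace.induced (fun f : X →L[ℝ] ℝ => (f : X → ℝ)) Pi.topologicalSpace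

/-- The Szlenk derivative of a subset of the dual of `X`. -/
def szlenkDeriv (X : Type*) [NormedAddCommGroup X] [NormedSpace ℝ X] (ε : ℝ)
    (F : Set (X →L[ℝ] ℝ)) : Set (X →L[ℝ] ℝ) :=
  {f : X →L[ℝ] ℝ | f ∈ F ∧ ∀ U : Set (X →L[ℝ] ℝ), IsOpen[wstar X] U → f ∈ U →
    ε ≤ Metric.diam (U ∩ F)}

/-- A bundled Banach space. -/
structure BanachSp where
  carrier : Type
  [grp : NormedAddCommGroup carrier]
  [mod : NormedSpace ℝ carrier]
  [cpl : CompleteSpace carrier]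

attribute [instance] BanachSp.grp BanachSp.mod BanachSp.cpl

/-- The Banach space `X_μ` associated to the seminorm `μ` satisfies `P`
(stated via arbitrary representatives, which are unique up to linear isometry). -/
def XmuSat (μ : (ℕ →₀ ℚ) → ℝ) (P : BanachSp → Prop) : Prop :=
  ∀ X : BanachSp, RepOf μ X.carrier → P X

/-- The set of elements of `ℬ` whose associated Banach space satisfies `P`. -/
def XmuB (P : BanachSp → Prop) : Set BSp := {μ : BSp | XmuSat μ.1 P}

/-- The set of elements of `𝒫` whose associated Banach space satisfies `P`. -/
def XmuP (P : BanachSp → Prop) : Set PSp := {μ : PSp | XmuSat μ.1 P}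

/-!
Since rational weights are dense, `clCoQ A` is just the closed convex hull of `A`, and by
Hahn–Banach a point `x` lies in it iff every functional `g` satisfies `sup g(A) ≥ g x`.
For `A = {y ∈ D : ‖y‖ < ‖x‖, ‖x - y‖ > 2‖x‖ - ε}` this supremum condition is, after rescaling
`x` to the unit sphere and perturbing into the dense set `D`, exactly the DLD2P applied to the
slice `{y ∈ B_X : g y > s}` that contains `x / ‖x‖`.
-/

open Metric Set

section

variable {X : Type*} [NormedAddCommGroup X] [NormedSpace ℝ X]

def ratConvexCombinations (A : Set X) : Set X :=
  {z : X | ∃ (n : ℕ) (q : Fin n → ℚ) (y : Fin n → X),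
    (∀ i, 0 < q i) ∧ (∑ i, q i = 1) ∧ (∀ i, y i ∈ A) ∧ z = ∑ i, (q i : ℝ) • y i}

lemma subset_ratConvexCombinations (A : Set X) : A ⊆ ratConvexCombinations A :=
  fun a ha => ⟨1, fun _ => 1, fun _ => a, fun _ => one_pos, by simp, fun _ => ha, by simp⟩

lemma ratConvexCombinations_subset_convexHull (A : Set X) :
    ratConvexCombinations A ⊆ convexHull ℝ A := by
  rintro _ ⟨n, q, y, hq, hqs, hy, rfl⟩
  exact (convex_convexHull ℝ A).sum_mem (fun i _ => by exact_mod_cast (hq i).le)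
    (by exact_mod_cast hqs) fun i _ => subset_convexHull ℝ A (hy i)

lemma combo_mem_ratConvexCombinations {A : Set X} {p : ℚ} (hp0 : 0 < p) (hp1 : p < 1)
    {z₁ z₂ : X} (h₁ : z₁ ∈ ratConvexCombinations A) (h₂ : z₂ ∈ ratConvexCombinations A) :
    (p : ℝ) • z₁ + (1 - (p : ℝ)) • z₂ ∈ ratConvexCombinations A := by
  obtain ⟨n, q, y, hq, hqs, hy, rfl⟩ := h₁
  obtain ⟨m, r, w, hr, hrs, hw, rfl⟩ := h₂
  refine ⟨n + m, Fin.append (fun i => p * q i) (fun j => (1 - p) * r j), Fin.append y w,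
    fun i => ?_, ?_, fun i => ?_, ?_⟩
  · refine Fin.addCases (fun i => ?_) (fun j => ?_) i
    · rw [Fin.append_left]; exact mul_pos hp0 (hq i)
    · rw [Fin.append_right]; exact mul_pos (sub_pos.2 hp1) (hr j)
  · simp only [Fin.sum_univ_add, Fin.append_left, Fin.append_right, ← Finset.mul_sum, hqs, hrs]
    ring
  · refine Fin.addCases (fun i => ?_) (fun j => ?_) i
    · rw [Fin.append_left]; exact hy i
    · rw [Fin.append_right]; exact hw j
  · simp only [Fin.sum_univ_add, Fin.append_left, Fin.append_right, Finset.smul_sum, smul_smul]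
    push_cast
    rfl

lemma convex_of_isClosed_of_forall_rat {s : Set X} (hs : IsClosed s)
    (h : ∀ a ∈ s, ∀ b ∈ s, ∀ p : ℚ, 0 < p → p < 1 → (p : ℝ) • a + (1 - (p : ℝ)) • b ∈ s) :
    Convex ℝ s := by
  refine convex_iff_forall_pos.2 fun a ha b hb θ μ hθ hμ hθμ => ?_
  obtain rfl : μ = 1 - θ := by linarith
  let φ : ℝ → X := fun t => t • a + (1 - t) • b
  have hrat : Ioo 0 1 ∩ range ((↑) : ℚ → ℝ) ⊆ φ ⁻¹' s := by
    rintro _ ⟨⟨hp0, hp1⟩, p, rfl⟩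
    exact h a ha b hb p (by exact_mod_cast hp0) (by exact_mod_cast hp1)
  have hIoo : Ioo 0 1 ⊆ φ ⁻¹' s :=
    (Rat.denseRange_cast.open_subset_closure_inter isOpen_Ioo).trans
      (closure_minimal hrat (hs.preimage (by fun_prop)))
  exact hIoo ⟨hθ, by linarith⟩

theorem clCoQ_eq_closedConvexHull (A : Set X) : clCoQ A = closedConvexHull ℝ A := by
  change closure (ratConvexCombinations A) = _
  refine (closure_minimal ((ratConvexCombinations_subset_convexHull A).trans
    convexHull_subset_closedConvexHull) isClosed_closedConvexHull).antisymm ?_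
  refine closedConvexHull_min ((subset_ratConvexCombinations A).trans subset_closure) ?_
    isClosed_closure
  refine convex_of_isClosed_of_forall_rat isClosed_closure fun a ha b hb p hp0 hp1 => ?_
  exact map_mem_closure₂ (f := fun a b => (p : ℝ) • a + (1 - (p : ℝ)) • b) (by fun_prop) ha hb
    fun _ ha' _ hb' => combo_mem_ratConvexCombinations hp0 hp1 ha' hb'

theorem mem_closedConvexHull_iff_forall_exists_lt {A : Set X} {x : X} :
    x ∈ closedConvexHull ℝ A ↔ ∀ (g : X →L[ℝ] ℝ) (s : ℝ), s < g x → ∃ a ∈ A, s < g a := by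
  rw [closedConvexHull_eq_closure_convexHull]
  constructor
  · intro hx g s hs
    obtain ⟨z, hsz, hz⟩ :=
      mem_closure_iff.1 hx {w | s < g w} (isOpen_lt continuous_const g.continuous) hs
    obtain ⟨a, ha, hza⟩ :=
      (g.toLinearMap.convexOn convex_univ).exists_ge_of_mem_convexHull (subset_univ A) hz
    exact ⟨a, ha, hsz.trans_le hza⟩
  · intro h
    by_contra hx
    obtain ⟨g, s, hgs, hsx⟩ :=
      geometric_hahn_banach_closed_point (convex_convexHull ℝ A).closure isClosed_closure hx
    obtain ⟨a, ha, hsa⟩ := h g s hsx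
    exact (hgs a (subset_closure (subset_convexHull ℝ A ha))).not_gt hsa

lemma forall_exists_lt_of_forall_norm_eq_one {A : Set X} {x : X} (hx : x ≠ 0)
    (h : ∀ g : X →L[ℝ] ℝ, ‖g‖ = 1 → ∀ s < g x, ∃ a ∈ A, s < g a)
    (g : X →L[ℝ] ℝ) (s : ℝ) (hs : s < g x) : ∃ a ∈ A, s < g a := by
  rcases eq_or_ne g 0 with rfl | hg
  · obtain ⟨g₀, hg₀, hg₀x⟩ := exists_dual_vector ℝ x (norm_ne_zero_iff.2 hx)
    obtain ⟨a, ha, -⟩ := h g₀ hg₀ 0 (by rw [hg₀x]; exact norm_pos_iff.2 hx)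
    exact ⟨a, ha, by simpa using hs⟩
  · have hgi : 0 < ‖g‖⁻¹ := inv_pos.2 (norm_pos_iff.2 hg)
    obtain ⟨a, ha, hsa⟩ := h (‖g‖⁻¹ • g) (norm_smul_inv_norm hg) (‖g‖⁻¹ * s)
      (by simpa using mul_lt_mul_of_pos_left hs hgi)
    exact ⟨a, ha, lt_of_mul_lt_mul_left (by simpa using hsa) hgi.le⟩

lemma Dense.exists_norm_lt_mem_of_isOpen {D V : Set X} (hD : Dense D) (hV : IsOpen V)
    {z : X} (hz : z ∈ V) {r : ℝ} (hr : 0 < r) (hzr : ‖z‖ ≤ r) :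
    ∃ d ∈ D, ‖d‖ < r ∧ d ∈ V := by
  have hz' : z ∈ closure (ball (0 : X) r) := by
    rw [closure_ball 0 hr.ne']
    simpa using hzr
  obtain ⟨d, ⟨hdV, hdr⟩, hdD⟩ :=
    hD.inter_open_nonempty _ (hV.inter isOpen_ball) (mem_closure_iff.1 hz' V hV hz)
  exact ⟨d, hdD, by simpa using hdr, hdV⟩

namespace HasDLD2P

lemma exists_far_of_norm_eq_one (hX : HasDLD2P X) {g : X →L[ℝ] ℝ} (hg : ‖g‖ = 1) {x : X}
    (hx : ‖x‖ = 1) {s : ℝ} (hs : s < g x) {ε : ℝ} (hε : 0 < ε) :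
    ∃ y, ‖y‖ ≤ 1 ∧ s < g y ∧ 2 - ε < ‖x - y‖ := by
  have hgx : g x ≤ 1 := by simpa [hg, hx] using (le_abs_self (g x)).trans (g.le_opNorm x)
  -- the slice must be proper (`α > 0`) yet still contain `x`
  set t := max s (g x - 1)
  have ht : t < g x := max_lt hs (by linarith)
  have hslice : IsSlice {y : X | ‖y‖ ≤ 1 ∧ 1 - (1 - t) < g y} := ⟨g, 1 - t, hg, by linarith, rfl⟩
  obtain ⟨y, ⟨hy, hty⟩, hxy⟩ := hX ε hε _ hslice x ⟨hx.le, by linarith⟩ hx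
  exact ⟨y, hy, (le_max_left _ _).trans_lt (by linarith), hxy⟩

lemma exists_far (hX : HasDLD2P X) {g : X →L[ℝ] ℝ} (hg : ‖g‖ = 1) {x : X} (hx : x ≠ 0)
    {s : ℝ} (hs : s < g x) {ε : ℝ} (hε : 0 < ε) :
    ∃ z, ‖z‖ ≤ ‖x‖ ∧ s < g z ∧ 2 * ‖x‖ - ε < ‖x - z‖ := by
  have hnx : 0 < ‖x‖ := norm_pos_iff.2 hx
  set u := ‖x‖⁻¹ • x
  have hu : ‖u‖ = 1 := by rw [norm_smul, norm_inv, norm_norm, inv_mul_cancel₀ hnx.ne']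
  have hgu : g u = g x / ‖x‖ := by simp [u, div_eq_inv_mul]
  obtain ⟨y, hy, hsy, huy⟩ := hX.exists_far_of_norm_eq_one hg hu
    (s := s / ‖x‖) (by rw [hgu]; exact div_lt_div_of_pos_right hs hnx) (div_pos hε hnx)
  have hxu : x - ‖x‖ • y = ‖x‖ • (u - y) := by simp [u, smul_sub, hnx.ne']
  refine ⟨‖x‖ • y, ?_, ?_, ?_⟩
  · rw [norm_smul, norm_norm]
    exact mul_le_of_le_one_right hnx.le hy
  · rw [map_smul, smul_eq_mul, ← div_lt_iff₀' hnx]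
    exact hsy
  · rw [hxu, norm_smul, norm_norm]
    calc 2 * ‖x‖ - ε = ‖x‖ * (2 - ε / ‖x‖) := by field_simp
      _ < ‖x‖ * ‖u - y‖ := mul_lt_mul_of_pos_left huy hnx

theorem mem_clCoQ (hX : HasDLD2P X) {D : Set X} (hD : Dense D) {ε : ℝ} (hε : 0 < ε) {x : X}
    (hx : x ≠ 0) : x ∈ clCoQ {y : X | y ∈ D ∧ ‖y‖ < ‖x‖ ∧ 2 * ‖x‖ - ε < ‖x - y‖} := by
  rw [clCoQ_eq_closedConvexHull, mem_closedConvexHull_iff_forall_exists_lt]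
  refine forall_exists_lt_of_forall_norm_eq_one hx fun g hg s hs => ?_
  obtain ⟨z, hzx, hsz, hxz⟩ := hX.exists_far hg hx hs hε
  have hV : IsOpen {w : X | s < g w ∧ 2 * ‖x‖ - ε < ‖x - w‖} :=
    (isOpen_lt continuous_const g.continuous).inter
      (isOpen_lt continuous_const (continuous_const.sub continuous_id).norm)
  obtain ⟨d, hdD, hdx, hsd, hxd⟩ :=
    hD.exists_norm_lt_mem_of_isOpen hV ⟨hsz, hxz⟩ (norm_pos_iff.2 hx) hzx
  exact ⟨d, ⟨hdD, hdx, hxd⟩, hsd⟩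

end HasDLD2P

theorem hasDLD2P_of_forall_mem_clCoQ {D : Set X} (hD : Dense D)
    (h : ∀ ε > (0 : ℝ), ∀ x ∈ D, x ≠ 0 →
      x ∈ clCoQ {y : X | y ∈ D ∧ ‖y‖ < ‖x‖ ∧ 2 * ‖x‖ - ε < ‖x - y‖}) :
    HasDLD2P X := by
  rintro ε hε _ ⟨f, α, hf, hα, rfl⟩ x ⟨-, hfx⟩ hx
  set δ := min ((f x - (1 - α)) / 2) (min (ε / 4) (1 / 2))
  have hδ : 0 < δ := lt_min (by linarith) (lt_min (by linarith) (by norm_num))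
  have hδγ : δ ≤ (f x - (1 - α)) / 2 := min_le_left _ _
  have hδε : δ ≤ ε / 4 := (min_le_right _ _).trans (min_le_left _ _)
  have hδ1 : δ ≤ 1 / 2 := (min_le_right _ _).trans (min_le_right _ _)
  -- approximate `x` from inside the open unit ball, so that `‖y‖ < ‖x'‖` keeps `y` in `B_X`
  obtain ⟨x', hx'D, hx'1, hx'x⟩ :=
    hD.exists_norm_lt_mem_of_isOpen isOpen_ball (mem_ball_self hδ) one_pos hx.le
  rw [mem_ball, dist_eq_norm] at hx'x
  have hx'δ : 1 - δ < ‖x'‖ := by linarith [norm_sub_norm_le x x', norm_sub_rev x' x]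
  have hx'0 : x' ≠ 0 := norm_pos_iff.1 (by linarith)
  have hfxx' : f x - f x' < δ := by
    have := (le_abs_self _).trans (f.le_opNorm (x - x'))
    rw [hf, one_mul, map_sub, norm_sub_rev] at this
    linarith
  have hmem := h δ hδ x' hx'D hx'0
  rw [clCoQ_eq_closedConvexHull, mem_closedConvexHull_iff_forall_exists_lt] at hmem
  obtain ⟨y, ⟨-, hyx', hx'y⟩, hfy⟩ := hmem f (f x' - δ) (by linarith)
  refine ⟨y, ⟨(hyx'.trans hx'1).le, by linarith⟩, ?_⟩
  linarith [norm_sub_le_norm_sub_add_norm_sub x' x y, norm_sub_rev x' x]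

end

theorem stmt3_general (X : Type) [NormedAddCommGroup X] [NormedSpace ℝ X]
    (D : Set X) (hD : Dense D) :
    HasDLD2P X ↔
      ∀ ε > (0 : ℝ), ∀ x ∈ D, x ≠ 0 →
        x ∈ clCoQ {y : X | y ∈ D ∧ ‖y‖ < ‖x‖ ∧ 2 * ‖x‖ - ε < ‖x - y‖} :=
  ⟨fun hX _ hε _ _ hx => hX.mem_clCoQ hD hε hx, hasDLD2P_of_forall_mem_clCoQ hD⟩

theorem stmt3 (X : Type) [NormedAddCommGroup X] [NormedSpace ℝ X] [CompleteSpace X]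
    (D : Set X) (hD : Dense D) :
    HasDLD2P X ↔
      ∀ ε > (0 : ℝ), ∀ x ∈ D, x ≠ 0 →
        x ∈ clCoQ {y : X | y ∈ D ∧ ‖y‖ < ‖x‖ ∧ 2 * ‖x‖ - ε < ‖x - y‖} :=
  stmt3_general X D hD
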